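/- arXiv:2406.06513 — 2 statements merged into one kernel-verified Lean document; each statement's English description precedes it below -/
import Mathlib

section
/- The morphism g on {0,1,2,3} defined by g(0)=01321, g(1)=01231, g(2)=02031, g(3)=02321 generates by iteration from 0 an infinite squarefree word. -/
/-- The morphism g(0)=01321, g(1)=01231, g(2)=02031, g(3)=02321. -/
def g : Fin 4 → List (Fin 4)
  | 0 => [0, 1, 3, 2, 1]
  | 1 => [0, 1, 2, 3, 1]
  | 2 => [0, 2, 0, 3, 1]
  | 3 => [0, 2, 3, 2, 1]

/-- An infinite word is squarefree if it contains no nonempty factor `xx`. -/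
def SquarefreeSeq {α : Type} (x : ℕ → α) : Prop :=
  ¬ ∃ i p : ℕ, 1 ≤ p ∧ ∀ j < p, x (i + j) = x (i + j + p)

/-! ### Auxiliary development -/

/-- The fixed point of `g` starting with `0`. -/
def xw : ℕ → Fin 4
  | 0 => 0
  | n+1 => (g (xw ((n+1)/5))).getD ((n+1) % 5) 0
  termination_by n => n
  decreasing_by exact Nat.div_lt_self (Nat.succ_pos n) (by norm_num)

lemma xw_zero : xw 0 = 0 := by rw [xw]

lemma xw_eq (n : ℕ) : xw n = (g (xw (n / 5))).getD (n % 5) 0 := by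
  cases n with
  | zero => rw [Nat.zero_div, Nat.zero_mod, xw_zero]; decide
  | succ n => rw [xw]

lemma xw_block (n r : ℕ) (h : r < 5) : xw (5 * n + r) = (g (xw n)).getD r 0 := by
  rw [xw_eq (5 * n + r), show (5 * n + r) / 5 = n by omega, show (5 * n + r) % 5 = r by omega]

lemma xw_aligned (n : ℕ) : xw (5 * n) = 0 := by
  have h := xw_block n 0 (by norm_num)
  rw [Nat.add_zero] at h
  rw [h]
  exact (by decide : ∀ c : Fin 4, (g c).getD 0 0 = 0) (xw n)

/-- Possible adjacent pairs in `xw` (a superset of the factors of length 2). -/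
def P2 (a b : Fin 4) : Prop :=
  (a, b) ∈ [((0:Fin 4),(1:Fin 4)), (0,2), (0,3), (1,0), (1,2), (1,3),
    (2,0), (2,1), (2,3), (3,1), (3,2)]

instance (a b : Fin 4) : Decidable (P2 a b) := by unfold P2; infer_instance

lemma pair_mem (n : ℕ) : P2 (xw n) (xw (n + 1)) := by
  have h5 : n % 5 < 5 := Nat.mod_lt _ (by norm_num)
  rcases Nat.lt_or_ge (n % 5) 4 with hr | hr
  · have e1 : xw n = (g (xw (n / 5))).getD (n % 5) 0 := xw_eq n
    have e2 : xw (n + 1) = (g (xw (n / 5))).getD (n % 5 + 1) 0 := by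
      rw [show n + 1 = 5 * (n / 5) + (n % 5 + 1) by omega]
      exact xw_block _ _ (by omega)
    rw [e1, e2]
    exact (by decide : ∀ c : Fin 4, ∀ r, r < 4 →
      P2 ((g c).getD r 0) ((g c).getD (r+1) 0)) (xw (n / 5)) (n % 5) hr
  · have hr4 : n % 5 = 4 := by omega
    have e1 : xw n = (g (xw (n / 5))).getD 4 0 := by rw [xw_eq n, hr4]
    have e2 : xw (n + 1) = 0 := by
      rw [show n + 1 = 5 * (n / 5 + 1) by omega]; exact xw_aligned _
    rw [e1, e2]
    exact (by decide : ∀ c : Fin 4, P2 ((g c).getD 4 0) 0) (xw (n / 5))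

/-! ### Synchronization -/

def selA (a b : Fin 4) (j : ℕ) : Fin 4 := if j < 5 then a else b

def selC (c d e : Fin 4) (u : ℕ) : Fin 4 := if u < 5 then c else if u < 10 then d else e

lemma selA_eq (m j : ℕ) (hj : j < 10) : xw (m + j / 5) = selA (xw m) (xw (m + 1)) j := by
  unfold selA
  rcases Nat.lt_or_ge j 5 with h | h
  · rw [if_pos h, show m + j / 5 = m by omega]
  · rw [if_neg (by omega), show m + j / 5 = m + 1 by omega]

lemma selC_eq (M u : ℕ) (hu : u < 15) :
    xw (M + u / 5) = selC (xw M) (xw (M + 1)) (xw (M + 2)) u := by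
  unfold selC
  rcases Nat.lt_or_ge u 5 with h | h
  · rw [if_pos h, show M + u / 5 = M by omega]
  · rcases Nat.lt_or_ge u 10 with h2 | h2
    · rw [if_neg (by omega), if_pos h2, show M + u / 5 = M + 1 by omega]
    · rw [if_neg (by omega), if_neg (by omega), show M + u / 5 = M + 2 by omega]

lemma sync_check : ∀ a b c d e : Fin 4, P2 a b → P2 c d → P2 d e →
    ∀ t, t < 5 → ¬t = 0 →
    ¬ (∀ j, j < 10 → (g (selA a b j)).getD (j % 5) 0
        = (g (selC c d e (t + j))).getD ((t + j) % 5) 0) := by decide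

lemma sync (p i : ℕ) (hp : 14 ≤ p) (H : ∀ j < p, xw (i + j) = xw (i + j + p)) :
    p % 5 = 0 := by
  by_contra ht
  have hm1 : i ≤ 5 * ((i + 4) / 5) := by omega
  have hm2 : 5 * ((i + 4) / 5) ≤ i + 4 := by omega
  set m := (i + 4) / 5 with hm
  set M := m + p / 5 with hM
  set t := p % 5 with htdef
  have ht5 : t < 5 := Nat.mod_lt _ (by norm_num)
  refine sync_check (xw m) (xw (m+1)) (xw M) (xw (M+1)) (xw (M+2))
    (pair_mem m) (pair_mem M) (pair_mem (M+1)) t ht5 ht (fun j hj => ?_)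
  have hH := H (5 * m + j - i) (by omega)
  rw [show i + (5 * m + j - i) = 5 * m + j by omega] at hH
  rw [show 5 * m + j + p = 5 * M + (t + j) by omega] at hH
  have e1 : xw (5 * m + j) = (g (xw (m + j / 5))).getD (j % 5) 0 := by
    rw [show 5 * m + j = 5 * (m + j / 5) + j % 5 by omega]
    exact xw_block _ _ (by omega)
  have e2 : xw (5 * M + (t + j)) = (g (xw (M + (t + j) / 5))).getD ((t + j) % 5) 0 := by
    rw [show 5 * M + (t + j) = 5 * (M + (t + j) / 5) + (t + j) % 5 by omega]
    exact xw_block _ _ (by omega)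
  rw [e1, e2, selA_eq m j hj, selC_eq M (t + j) (by omega)] at hH
  exact hH

/-! ### Finite check for short squares -/

def g2 : Fin 4 → List (Fin 4)
  | 0 => [0,1,3,2,1,0,1,2,3,1,0,2,3,2,1,0,2,0,3,1,0,1,2,3,1]
  | 1 => [0,1,3,2,1,0,1,2,3,1,0,2,0,3,1,0,2,3,2,1,0,1,2,3,1]
  | 2 => [0,1,3,2,1,0,2,0,3,1,0,1,3,2,1,0,2,3,2,1,0,1,2,3,1]
  | 3 => [0,1,3,2,1,0,2,0,3,1,0,2,3,2,1,0,2,0,3,1,0,1,2,3,1]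

lemma g2_spec : ∀ c : Fin 4, ∀ u, u < 25 →
    (g2 c).getD u 0 = (g ((g c).getD (u / 5) 0)).getD (u % 5) 0 := by decide

lemma xw_block25 (M u : ℕ) (h : u < 25) : xw (25 * M + u) = (g2 (xw M)).getD u 0 := by
  have e1 : xw (25 * M + u) = (g (xw (5 * M + u / 5))).getD (u % 5) 0 := by
    rw [show 25 * M + u = 5 * (5 * M + u / 5) + u % 5 by omega]
    exact xw_block _ _ (by omega)
  have e2 : xw (5 * M + u / 5) = (g (xw M)).getD (u / 5) 0 := xw_block _ _ (by omega)
  rw [e1, e2, g2_spec (xw M) u h]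

def W (a b c : Fin 4) (u : ℕ) : Fin 4 :=
  if u < 25 then (g2 a).getD u 0 else if u < 50 then (g2 b).getD (u - 25) 0
  else (g2 c).getD (u - 50) 0

lemma window3 (M u : ℕ) (h : u < 75) :
    xw (25 * M + u) = W (xw M) (xw (M + 1)) (xw (M + 2)) u := by
  unfold W
  rcases Nat.lt_or_ge u 25 with h1 | h1
  · rw [if_pos h1]; exact xw_block25 M u h1
  · rcases Nat.lt_or_ge u 50 with h2 | h2
    · rw [if_neg (by omega), if_pos h2, show 25 * M + u = 25 * (M + 1) + (u - 25) by omega]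
      exact xw_block25 (M + 1) _ (by omega)
    · rw [if_neg (by omega), if_neg (by omega),
        show 25 * M + u = 25 * (M + 2) + (u - 50) by omega]
      exact xw_block25 (M + 2) _ (by omega)

lemma small_check : ∀ a b c : Fin 4, P2 a b → P2 b c → ∀ p, p < 15 → ∀ o, o < 25 → 1 ≤ p →
    ¬ (∀ j, j < p → W a b c (o + j) = W a b c (o + j + p)) := by decide

/-! ### Letter/position facts -/

lemma g_det : ∀ c c' : Fin 4, (∀ r, r < 5 → (g c).getD r 0 = (g c').getD r 0) → c = c' := by
  decide

lemma prefix3 : ∀ c c' : Fin 4, (∀ r, r < 3 → (g c).getD r 0 = (g c').getD r 0) → c = c' := by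
  decide

lemma suffix4 : ∀ c c' : Fin 4,
    (∀ r, r < 5 → 1 ≤ r → (g c).getD r 0 = (g c').getD r 0) → c = c' := by decide

lemma suffix3 : ∀ c c' : Fin 4,
    (∀ r, r < 5 → 2 ≤ r → (g c).getD r 0 = (g c').getD r 0) →
    c = c' ∨ (c = 0 ∧ c' = 3) ∨ (c = 3 ∧ c' = 0) := by decide

lemma prefix2 : ∀ c c' : Fin 4,
    (∀ r, r < 2 → (g c).getD r 0 = (g c').getD r 0) →
    c = c' ∨ (c = 0 ∧ c' = 1) ∨ (c = 1 ∧ c' = 0) ∨ (c = 2 ∧ c' = 3) ∨ (c = 3 ∧ c' = 2) := by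
  decide

lemma fact0 : ∀ c : Fin 4, ∀ r, r < 5 → (g c).getD r 0 = 0 →
    r = 0 ∨ (r = 2 ∧ c = 2) := by decide

lemma fact3 : ∀ c : Fin 4, ∀ r, r < 5 → (g c).getD r 0 = 3 →
    (r = 2 ∧ (c = 0 ∨ c = 3)) ∨ (r = 3 ∧ (c = 1 ∨ c = 2)) := by decide

lemma fact2 : ∀ c : Fin 4, ∀ r, r < 5 → (g c).getD r 0 = 2 →
    (r = 1 ∧ (c = 2 ∨ c = 3)) ∨ (r = 2 ∧ c = 1) ∨ (r = 3 ∧ (c = 0 ∨ c = 3)) := by decide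

lemma fact1 : ∀ c : Fin 4, ∀ r, r < 5 → (g c).getD r 0 = 1 →
    (r = 1 ∧ (c = 0 ∨ c = 1)) ∨ r = 4 := by decide

lemma fact20 : ∀ c : Fin 4, (g c).getD 2 0 = 0 → c = 2 := by decide

lemma factD3 : ∀ c : Fin 4, ¬ (g c).getD 3 0 = 0 := by decide

lemma factD4 : ∀ c : Fin 4, ¬ (g c).getD 4 0 = 0 := by decide

/-! ### The two "pseudosquare" configurations -/

lemma pseudoA (k' q : ℕ) (hq : 3 ≤ q)
    (run : ∀ n, k' + 1 ≤ n → n < k' + q → xw n = xw (n + q))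
    (h0 : xw k' = 0) (h3 : xw (k' + q) = 3) (h2 : xw (k' + 2 * q) = 2) : False := by
  have e0 : (g (xw (k' / 5))).getD (k' % 5) 0 = 0 := by rw [← xw_eq]; exact h0
  have e3 : (g (xw ((k' + q) / 5))).getD ((k' + q) % 5) 0 = 3 := by rw [← xw_eq]; exact h3
  have e2 : (g (xw ((k' + 2 * q) / 5))).getD ((k' + 2 * q) % 5) 0 = 2 := by
    rw [← xw_eq]; exact h2
  have f0 := fact0 _ _ (Nat.mod_lt _ (by norm_num)) e0
  have f3 := fact3 _ _ (Nat.mod_lt _ (by norm_num)) e3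
  have f2 := fact2 _ _ (Nat.mod_lt _ (by norm_num)) e2
  rcases f0 with hr1 | ⟨hr1, hc1⟩
  · rcases f3 with ⟨hr2, _⟩ | ⟨hr2, _⟩
    · -- r1 = 0, r2 = 2 : impossible via the third letter
      rcases f2 with ⟨hr3, _⟩ | ⟨hr3, _⟩ | ⟨hr3, _⟩ <;> omega
    · -- r1 = 0, r2 = 3 : q % 5 = 3
      by_cases hq3 : q = 3
      · subst hq3
        have r1 : xw (k' + 2) = xw (k' + 2 + 3) := run (k' + 2) (by omega) (by omega)
        have r2e : xw (k' + 1) = xw (k' + 1 + 3) := run (k' + 1) (by omega) (by omega)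
        have a5 : xw (k' + 2 + 3) = 0 := by
          rw [show k' + 2 + 3 = 5 * (k' / 5 + 1) by omega]; exact xw_aligned _
        have b2 : xw (k' + 2) = (g (xw (k' / 5))).getD 2 0 := by
          rw [show k' + 2 = 5 * (k' / 5) + 2 by omega]; exact xw_block _ _ (by norm_num)
        have b1 : xw (k' + 1) = (g (xw (k' / 5))).getD 1 0 := by
          rw [show k' + 1 = 5 * (k' / 5) + 1 by omega]; exact xw_block _ _ (by norm_num)
        have b4 : xw (k' + 1 + 3) = (g (xw (k' / 5))).getD 4 0 := by
          rw [show k' + 1 + 3 = 5 * (k' / 5) + 4 by omega]; exact xw_block _ _ (by norm_num)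
        have hcc : xw (k' / 5) = 2 := fact20 _ (by rw [← b2, r1, a5])
        rw [b1, b4, hcc] at r2e
        exact absurd r2e (by decide)
      · have hq8 : 8 ≤ q := by omega
        have hrun := run (5 * (k' / 5) + 5) (by omega) (by omega)
        have l0 : xw (5 * (k' / 5) + 5) = 0 := by
          rw [show 5 * (k' / 5) + 5 = 5 * (k' / 5 + 1) by omega]; exact xw_aligned _
        have hb : xw (5 * (k' / 5) + 5 + q)
            = (g (xw ((5 * (k' / 5) + 5 + q) / 5))).getD 3 0 := by
          rw [xw_eq (5 * (k' / 5) + 5 + q), show (5 * (k' / 5) + 5 + q) % 5 = 3 by omega]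
        rw [l0, hb] at hrun
        exact factD3 _ hrun.symm
  · rcases f3 with ⟨hr2, hc2⟩ | ⟨hr2, _⟩
    · -- r1 = 2 (parent 2), r2 = 2 : q % 5 = 0
      have hrun := run (k' + 1) (by omega) (by omega)
      have bl : xw (k' + 1) = (g (xw (k' / 5))).getD 3 0 := by
        rw [show k' + 1 = 5 * (k' / 5) + 3 by omega]; exact xw_block _ _ (by norm_num)
      have br : xw (k' + 1 + q) = (g (xw ((k' + q) / 5))).getD 3 0 := by
        rw [xw_eq (k' + 1 + q), show (k' + 1 + q) % 5 = 3 by omega,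
          show (k' + 1 + q) / 5 = (k' + q) / 5 by omega]
      rw [bl, br, hc1] at hrun
      rcases hc2 with h | h <;> rw [h] at hrun <;> exact absurd hrun (by decide)
    · -- r1 = 2, r2 = 3 : impossible via the third letter
      rcases f2 with ⟨hr3, _⟩ | ⟨hr3, _⟩ | ⟨hr3, _⟩ <;> omega

lemma pseudoB (k' q : ℕ) (hq : 3 ≤ q)
    (run : ∀ n, k' + 1 ≤ n → n < k' + q → xw n = xw (n + q))
    (h3 : xw k' = 3) (h0 : xw (k' + q) = 0) (h1 : xw (k' + 2 * q) = 1) : False := by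
  have e3 : (g (xw (k' / 5))).getD (k' % 5) 0 = 3 := by rw [← xw_eq]; exact h3
  have e0 : (g (xw ((k' + q) / 5))).getD ((k' + q) % 5) 0 = 0 := by rw [← xw_eq]; exact h0
  have e1 : (g (xw ((k' + 2 * q) / 5))).getD ((k' + 2 * q) % 5) 0 = 1 := by
    rw [← xw_eq]; exact h1
  have f3 := fact3 _ _ (Nat.mod_lt _ (by norm_num)) e3
  have f0 := fact0 _ _ (Nat.mod_lt _ (by norm_num)) e0
  have f1 := fact1 _ _ (Nat.mod_lt _ (by norm_num)) e1
  have hr1d : k' % 5 = 2 ∨ k' % 5 = 3 := by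
    rcases f3 with ⟨h, _⟩ | ⟨h, _⟩
    · exact Or.inl h
    · exact Or.inr h
  have hr2d : (k' + q) % 5 = 0 ∨ (k' + q) % 5 = 2 := by
    rcases f0 with h | ⟨h, _⟩
    · exact Or.inl h
    · exact Or.inr h
  have hr3d : (k' + 2 * q) % 5 = 1 ∨ (k' + 2 * q) % 5 = 4 := by
    rcases f1 with ⟨h, _⟩ | h
    · exact Or.inl h
    · exact Or.inr h
  have hk3 : k' % 5 = 3 ∧ q % 5 = 4 := by omega
  · -- r1 = 3, r2 = 2, r3 = 1 : q % 5 = 4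
    have hrun := run (5 * (k' / 5) + 5) (by omega) (by omega)
    have l0 : xw (5 * (k' / 5) + 5) = 0 := by
      rw [show 5 * (k' / 5) + 5 = 5 * (k' / 5 + 1) by omega]; exact xw_aligned _
    have hb : xw (5 * (k' / 5) + 5 + q)
        = (g (xw ((5 * (k' / 5) + 5 + q) / 5))).getD 4 0 := by
      rw [xw_eq (5 * (k' / 5) + 5 + q), show (5 * (k' / 5) + 5 + q) % 5 = 4 by omega]
    rw [l0, hb] at hrun
    exact factD4 _ hrun.symm

/-! ### No squares -/

lemma noSquare : ∀ p i : ℕ, 1 ≤ p → ¬ (∀ j < p, xw (i + j) = xw (i + j + p)) := by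
  intro p
  induction p using Nat.strong_induction_on with
  | _ p IH =>
    intro i hp H
    by_cases hps : p ≤ 14
    · -- short squares : finite check
      refine small_check (xw (i / 25)) (xw (i / 25 + 1)) (xw (i / 25 + 2))
        (pair_mem _) (pair_mem _) p (by omega) (i % 25) (Nat.mod_lt _ (by norm_num)) hp
        (fun j hj => ?_)
      have hH := H j hj
      have w1 : xw (i + j) = W (xw (i / 25)) (xw (i / 25 + 1)) (xw (i / 25 + 2)) (i % 25 + j) := by
        rw [show i + j = 25 * (i / 25) + (i % 25 + j) by omega]
        exact window3 _ _ (by omega)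
      have w2 : xw (i + j + p)
          = W (xw (i / 25)) (xw (i / 25 + 1)) (xw (i / 25 + 2)) (i % 25 + j + p) := by
        rw [show i + j + p = 25 * (i / 25) + (i % 25 + j + p) by omega]
        exact window3 _ _ (by omega)
      rw [w1, w2] at hH
      exact hH
    · -- long squares
      have hq5 : p % 5 = 0 := sync p i (by omega) H
      set q := p / 5 with hqdef
      have hpq : p = 5 * q := by omega
      have hq : 3 ≤ q := by omega
      have hi1 : i ≤ 5 * ((i + 4) / 5) := by omega
      have hi2 : 5 * ((i + 4) / 5) ≤ i + 4 := by omega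
      set n0 := (i + 4) / 5 with hn0
      have run : ∀ n, n0 ≤ n → 5 * n + 5 ≤ i + p → xw n = xw (n + q) := by
        intro n h1 h2
        apply g_det
        intro r hr
        have hH := H (5 * n + r - i) (by omega)
        rw [show i + (5 * n + r - i) = 5 * n + r by omega] at hH
        rw [show 5 * n + r + p = 5 * (n + q) + r by omega] at hH
        rw [xw_block n r hr, xw_block (n + q) r hr] at hH
        exact hH
      by_cases hs0 : 5 * n0 = i
      · exact IH q (by omega) n0 (by omega)
          (fun j hj => run (n0 + j) (by omega) (by omega))
      · have hn1 : 1 ≤ n0 := by omega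
        set s := 5 * n0 - i with hsdef
        have hs14 : 1 ≤ s ∧ s ≤ 4 := by omega
        set k' := n0 - 1 with hk'
        have left : ∀ r, r < 5 → 5 - s ≤ r →
            (g (xw k')).getD r 0 = (g (xw (k' + q))).getD r 0 := by
          intro r h2 h1
          have hH := H (5 * k' + r - i) (by omega)
          rw [show i + (5 * k' + r - i) = 5 * k' + r by omega] at hH
          rw [show 5 * k' + r + p = 5 * (k' + q) + r by omega] at hH
          rw [xw_block k' r h2, xw_block (k' + q) r h2] at hH
          exact hH
        have right : ∀ r, r < 5 → r < 5 - s →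
            (g (xw (k' + q))).getD r 0 = (g (xw (k' + 2 * q))).getD r 0 := by
          intro r h2 h1
          have hH := H (5 * (k' + q) + r - i) (by omega)
          rw [show i + (5 * (k' + q) + r - i) = 5 * (k' + q) + r by omega] at hH
          rw [show 5 * (k' + q) + r + p = 5 * (k' + 2 * q) + r by omega] at hH
          rw [xw_block (k' + q) r h2, xw_block (k' + 2 * q) r h2] at hH
          exact hH
        have runq : ∀ n, k' + 1 ≤ n → n < k' + q → xw n = xw (n + q) :=
          fun n h1 h2 => run n (by omega) (by omega)
        have extendL : xw k' = xw (k' + q) → False := by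
          intro haa
          refine IH q (by omega) k' (by omega) (fun j hj => ?_)
          rcases Nat.eq_zero_or_pos j with h0 | h0
          · subst h0; simpa using haa
          · exact runq (k' + j) (by omega) (by omega)
        have extendR : xw (k' + q) = xw (k' + 2 * q) → False := by
          intro hbb
          refine IH q (by omega) (k' + 1) (by omega) (fun j hj => ?_)
          by_cases hjq : j + 1 < q
          · exact runq (k' + 1 + j) (by omega) (by omega)
          · rw [show k' + 1 + j = k' + q by omega, show k' + q + q = k' + 2 * q by omega]
            exact hbb
        have hscases : s = 1 ∨ s = 2 ∨ s = 3 ∨ s = 4 := by omega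
        rcases hscases with hs | hs | hs | hs
        · exact extendR (prefix3 _ _ (fun r hr => right r (by omega) (by omega)))
        · exact extendR (prefix3 _ _ (fun r hr => right r (by omega) (by omega)))
        · rcases suffix3 (xw k') (xw (k' + q))
            (fun r h5 h2r => left r h5 (by omega)) with heq | ⟨hA0, hA3⟩ | ⟨hB3, hB0⟩
          · exact extendL heq
          · rcases prefix2 (xw (k' + q)) (xw (k' + 2 * q))
              (fun r hr => right r (by omega) (by omega)) with heq' | hcl
            · exact extendR heq'
            · have hb2 : xw (k' + 2 * q) = 2 := by
                rcases hcl with ⟨h1, h2⟩ | ⟨h1, h2⟩ | ⟨h1, h2⟩ | ⟨h1, h2⟩ <;>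
                  first
                    | (rw [hA3] at h1; exact absurd h1 (by decide))
                    | exact h2
              exact pseudoA k' q hq runq hA0 hA3 hb2
          · rcases prefix2 (xw (k' + q)) (xw (k' + 2 * q))
              (fun r hr => right r (by omega) (by omega)) with heq' | hcl
            · exact extendR heq'
            · have hb1 : xw (k' + 2 * q) = 1 := by
                rcases hcl with ⟨h1, h2⟩ | ⟨h1, h2⟩ | ⟨h1, h2⟩ | ⟨h1, h2⟩ <;>
                  first
                    | (rw [hB0] at h1; exact absurd h1 (by decide))
                    | exact h2
              exact pseudoB k' q hq runq hB3 hB0 hb1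
        · exact extendL (suffix4 _ _ (fun r h5 h1 => left r h5 (by omega)))

/-! ### Main theorem -/

/-- `g` generates by iteration from `0` an infinite squarefree word
(a fixed point of the `5`-uniform morphism `g` starting with `0`). -/
theorem g_fixed_point_squarefree :
    ∃ x : ℕ → Fin 4, x 0 = 0 ∧
      (∀ n : ℕ, ∀ r < 5, x (5 * n + r) = (g (x n)).getD r 0) ∧
      SquarefreeSeq x := by
  refine ⟨xw, xw_zero, fun n r hr => xw_block n r hr, ?_⟩
  rintro ⟨i, p, hp, hsq⟩
  exact noSquare p i hp hsq
end

section
/- The Thue–Morse sequence is not ultimately periodic. -/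
/-- The Thue–Morse sequence. -/
def tm (n : ℕ) : ℕ := ((Nat.digits 2 n).count 1) % 2

lemma tm_lt_two (n : ℕ) : tm n < 2 := Nat.mod_lt _ (by norm_num)

lemma tm_two_mul (n : ℕ) : tm (2 * n) = tm n := by
  rcases Nat.eq_zero_or_pos n with h | h
  · simp [h]
  · unfold tm
    rw [Nat.digits_def' (by norm_num : 1 < 2) (by omega)]
    have h1 : 2 * n % 2 = 0 := by omega
    have h2 : 2 * n / 2 = n := by omega
    rw [h1, h2]
    simp [List.count_cons]

lemma tm_two_mul_add_one (n : ℕ) : tm (2 * n + 1) = (tm n + 1) % 2 := by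
  unfold tm
  rw [Nat.digits_def' (by norm_num : 1 < 2) (by omega)]
  have h1 : (2 * n + 1) % 2 = 1 := by omega
  have h2 : (2 * n + 1) / 2 = n := by omega
  rw [h1, h2]
  simp [List.count_cons, Nat.add_mod]

lemma tm_pow (j : ℕ) : tm (2 ^ j) = 1 ∧ tm (3 * 2 ^ j) = 0 := by
  induction j with
  | zero =>
      constructor
      · show ((Nat.digits 2 1).count 1) % 2 = 1
        norm_num
      · show ((Nat.digits 2 3).count 1) % 2 = 0
        norm_num [Nat.digits_def' (by norm_num : 1 < 2)]
  | succ j ih =>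
      have h1 : (2 : ℕ) ^ (j + 1) = 2 * 2 ^ j := by ring
      have h2 : (3 : ℕ) * (2 * 2 ^ j) = 2 * (3 * 2 ^ j) := by ring
      rw [h1, h2, tm_two_mul, tm_two_mul]
      exact ih

lemma eventually_const {M : ℕ} (h : ∀ k ≥ M, tm (k + 1) = tm k) :
    ∀ n ≥ M, tm n = tm M := by
  intro n hn
  induction n with
  | zero => have : M = 0 := by omega
            rw [this]
  | succ m ih =>
      rcases Nat.lt_or_ge m M with hm | hm
      · have : M = m + 1 := by omega
        rw [this]
      · rw [h m hm, ih hm]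

lemma no_period : ∀ p, 1 ≤ p → ∀ N, ¬ (∀ n ≥ N, tm (n + p) = tm n) := by
  intro p
  induction p using Nat.strong_induction_on with
  | _ p ih =>
    intro hp N hper
    rcases Nat.even_or_odd p with ⟨q, hq⟩ | ⟨q, hq⟩
    · -- even case : q is a smaller period
      have hq1 : 1 ≤ q := by omega
      refine ih q (by omega) hq1 N ?_
      intro n hn
      have e1 : tm (2 * n) = tm n := tm_two_mul n
      have e2 : tm (2 * (n + q)) = tm (n + q) := tm_two_mul (n + q)
      have e3 : tm (2 * n + p) = tm (2 * n) := hper (2 * n) (by omega)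
      have e4 : 2 * (n + q) = 2 * n + p := by omega
      rw [e4] at e2
      omega
    · -- odd case : p = 2q + 1, tm eventually constant
      have key : ∀ m ≥ N, tm (m + q + 1) = tm (m + q) := by
        intro m hm
        have hA : tm (2 * m + p) = tm (2 * m) := hper (2 * m) (by omega)
        have hB : tm (2 * m + 1 + p) = tm (2 * m + 1) := hper (2 * m + 1) (by omega)
        have r1 : 2 * m + p = 2 * (m + q) + 1 := by omega
        have r2 : 2 * m + 1 + p = 2 * (m + q + 1) := by omega
        rw [r1] at hA
        rw [r2] at hB
        have e1 : tm (2 * (m + q) + 1) = (tm (m + q) + 1) % 2 := tm_two_mul_add_one _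
        have e2 : tm (2 * (m + q + 1)) = tm (m + q + 1) := tm_two_mul _
        have e3 : tm (2 * m) = tm m := tm_two_mul m
        have e4 : tm (2 * m + 1) = (tm m + 1) % 2 := tm_two_mul_add_one m
        have l1 := tm_lt_two m
        have l2 := tm_lt_two (m + q)
        have l3 := tm_lt_two (m + q + 1)
        omega
      have hconst : ∀ n ≥ N + q, tm n = tm (N + q) := by
        apply eventually_const
        intro k hk
        have := key (k - q) (by omega)
        rw [show k - q + q = k by omega] at this
        exact this
      have hj1 : N + q < 2 ^ (N + q) := Nat.lt_two_pow_self
      have h1 := hconst (2 ^ (N + q)) (le_of_lt hj1)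
      have h2 := hconst (3 * 2 ^ (N + q)) (by nlinarith)
      have t1 := (tm_pow (N + q)).1
      have t2 := (tm_pow (N + q)).2
      omega

/-- The Thue–Morse sequence is not ultimately periodic. -/
theorem thue_morse_not_ultimately_periodic :
    ¬ ∃ N p : ℕ, 1 ≤ p ∧ ∀ n ≥ N, tm (n + p) = tm n := by
  rintro ⟨N, p, hp, h⟩
  exact no_period p hp N h
end
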